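/- arXiv:math/0611634 — 6 statements merged into one kernel-verified Lean document; each statement's English description precedes it below -/
import Mathlib

section
/- Let (f_k) be a frame for a separable Hilbert space H with frame bounds A and B, let (e_i) be an orthonormal basis of H, and let H₀ : H → H be a bounded operator. Then A · Σ_i ‖H₀* e_i‖² ≤ Σ_k ‖H₀ f_k‖² ≤ B · Σ_i ‖H₀* e_i‖². -/
open scoped InnerProductSpace

lemma tsum_nonneg_eq_toReal {α : Type*} (g : α → ℝ) (hg : ∀ a, 0 ≤ g a) :
    ∑' a, g a = (∑' a, ENNReal.ofReal (g a)).toReal := by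
  by_cases h : Summable g
  · rw [← ENNReal.ofReal_tsum_of_nonneg hg h, ENNReal.toReal_ofReal (tsum_nonneg hg)]
  · rw [tsum_eq_zero_of_not_summable h]
    have h2 : ¬ Summable (fun a => (g a).toNNReal) := by
      intro hs
      exact h (by simpa [fun a => Real.coe_toNNReal (g a) (hg a)] using
        (NNReal.summable_coe.2 hs))
    have h3 : (∑' a, ENNReal.ofReal (g a)) = ⊤ := by
      simpa [ENNReal.ofReal] using
        not_not.1 (fun hne => h2 (ENNReal.tsum_coe_ne_top_iff_summable.1 hne))
    simp [h3]

lemma parseval_hasSum {H : Type*} [NormedAddCommGroup H] [InnerProductSpace ℂ H]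
    [CompleteSpace H] {ι : Type*} (e : HilbertBasis ι ℂ H) (x : H) :
    HasSum (fun i => ‖⟪e i, x⟫_ℂ‖ ^ 2) (‖x‖ ^ 2) := by
  have h := e.hasSum_inner_mul_inner x x
  have heq : (fun i => ⟪x, e i⟫_ℂ * ⟪e i, x⟫_ℂ) = fun i => ((‖⟪e i, x⟫_ℂ‖ ^ 2 : ℝ) : ℂ) := by
    funext i
    rw [← inner_conj_symm x (e i), RCLike.conj_mul]; norm_cast
  rw [heq, inner_self_eq_norm_sq_to_K] at h
  exact (Complex.hasSum_ofReal.1 (by simpa using h))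

/-- For a frame `(f k)` with bounds `A, B`, an orthonormal basis `(e i)` and a
bounded operator `H₀` on a separable Hilbert space `H`,
`A · Σ_i ‖H₀* e_i‖² ≤ Σ_k ‖H₀ f_k‖² ≤ B · Σ_i ‖H₀* e_i‖²`. -/
theorem frame_op_norm_sq_bounds
    {H : Type*} [NormedAddCommGroup H] [InnerProductSpace ℂ H] [CompleteSpace H]
    {ι κ : Type*} (e : HilbertBasis ι ℂ H) (f : κ → H) (A B : ℝ)
    (hA : 0 < A) (hB : 0 < B)
    (hframe : ∀ x : H,
      A * ‖x‖ ^ 2 ≤ ∑' k, ‖⟪f k, x⟫_ℂ‖ ^ 2 ∧ ∑' k, ‖⟪f k, x⟫_ℂ‖ ^ 2 ≤ B * ‖x‖ ^ 2)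
    (H₀ : H →L[ℂ] H) :
    A * ∑' i, ‖ContinuousLinearMap.adjoint H₀ (e i)‖ ^ 2 ≤ ∑' k, ‖H₀ (f k)‖ ^ 2 ∧
      ∑' k, ‖H₀ (f k)‖ ^ 2 ≤ B * ∑' i, ‖ContinuousLinearMap.adjoint H₀ (e i)‖ ^ 2 := by
  set T := ContinuousLinearMap.adjoint H₀ with hT
  -- summability of frame coefficients
  have hsummable : ∀ x : H, Summable (fun k => ‖⟪f k, x⟫_ℂ‖ ^ 2) := by
    intro x
    by_cases hs : Summable (fun k => ‖⟪f k, x⟫_ℂ‖ ^ 2)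
    · exact hs
    · have h0 := (hframe x).1
      rw [tsum_eq_zero_of_not_summable hs] at h0
      have hx : x = 0 := by
        have : ‖x‖ ^ 2 ≤ 0 := by nlinarith
        have : ‖x‖ = 0 := by nlinarith [norm_nonneg x]
        simpa using this
      subst hx
      simpa using summable_zero
  -- Parseval for H₀ (f k)
  have hPar : ∀ k, HasSum (fun i => ‖⟪f k, T (e i)⟫_ℂ‖ ^ 2) (‖H₀ (f k)‖ ^ 2) := by
    intro k
    have h := parseval_hasSum e (H₀ (f k))
    have : (fun i => ‖⟪e i, H₀ (f k)⟫_ℂ‖ ^ 2) = fun i => ‖⟪f k, T (e i)⟫_ℂ‖ ^ 2 := by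
      funext i
      rw [← ContinuousLinearMap.adjoint_inner_left H₀ (f k) (e i), norm_inner_symm]
    rwa [this] at h
  set g : ι → κ → ENNReal := fun i k => ENNReal.ofReal (‖⟪f k, T (e i)⟫_ℂ‖ ^ 2) with hg
  set S : ENNReal := ∑' k, ENNReal.ofReal (‖H₀ (f k)‖ ^ 2) with hS
  set T' : ENNReal := ∑' i, ENNReal.ofReal (‖T (e i)‖ ^ 2) with hT'
  have hSeq : S = ∑' i, ∑' k, g i k := by
    rw [hS, ← ENNReal.tsum_comm]
    congr 1
    funext k
    rw [← (hPar k).tsum_eq,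
      ENNReal.ofReal_tsum_of_nonneg (fun i => sq_nonneg _) (hPar k).summable]
  have hLow : ENNReal.ofReal A * T' ≤ S := by
    rw [hSeq, hT', ← ENNReal.tsum_mul_left]
    refine ENNReal.tsum_le_tsum fun i => ?_
    simp only [hg]
    rw [← ENNReal.ofReal_mul hA.le, ←
      ENNReal.ofReal_tsum_of_nonneg (fun k => sq_nonneg _) (hsummable (T (e i)))]
    exact ENNReal.ofReal_le_ofReal (hframe (T (e i))).1
  have hHigh : S ≤ ENNReal.ofReal B * T' := by
    rw [hSeq, hT', ← ENNReal.tsum_mul_left]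
    refine ENNReal.tsum_le_tsum fun i => ?_
    simp only [hg]
    rw [← ENNReal.ofReal_mul hB.le, ←
      ENNReal.ofReal_tsum_of_nonneg (fun k => sq_nonneg _) (hsummable (T (e i)))]
    exact ENNReal.ofReal_le_ofReal (hframe (T (e i))).2
  have e1 : ∑' k, ‖H₀ (f k)‖ ^ 2 = S.toReal :=
    tsum_nonneg_eq_toReal _ (fun k => sq_nonneg _)
  have e2 : ∑' i, ‖T (e i)‖ ^ 2 = T'.toReal :=
    tsum_nonneg_eq_toReal _ (fun i => sq_nonneg _)
  rw [e1, e2]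
  by_cases htop : T' = ⊤
  · have hStop : S = ⊤ := by
      refine top_le_iff.mp ?_
      calc (⊤ : ENNReal) = ENNReal.ofReal A * T' := by
            rw [htop, ENNReal.mul_top (by simpa using hA)]
        _ ≤ S := hLow
    simp [htop, hStop]
  · have hSt : S ≠ ⊤ := by
      intro h
      rw [h, top_le_iff] at hHigh
      exact htop (by
        rcases ENNReal.mul_eq_top.mp hHigh with ⟨_, h2⟩ | ⟨h1, _⟩
        · exact h2
        · exact absurd h1 (by simp))
    constructor
    · have := ENNReal.toReal_mono hSt hLow
      rwa [ENNReal.toReal_mul, ENNReal.toReal_ofReal hA.le] at this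
    · have hBt : ENNReal.ofReal B * T' ≠ ⊤ :=
        ENNReal.mul_ne_top ENNReal.ofReal_ne_top htop
      have := ENNReal.toReal_mono hBt hHigh
      rwa [ENNReal.toReal_mul, ENNReal.toReal_ofReal hB.le] at this
end

section
/- A bounded operator H₀ : H → H on a separable Hilbert space is Hilbert–Schmidt if and only if Σ_k ‖H₀ f_k‖² < ∞ for some (equivalently, for every) frame (f_k) of H. Moreover, if (f_k) has frame bounds A, B, then √A · ‖H₀‖_HS ≤ (Σ_k ‖H₀ f_k‖²)^{1/2} ≤ √B · ‖H₀‖_HS. -/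
/-!
Expanding `‖H₀ f_k‖²` by Parseval in the basis `(e_i)` and exchanging the two sums gives
`Σ_k ‖H₀ f_k‖² = Σ_i Σ_k |⟪f_k, H₀† e_i⟫|²`, and the frame inequality at `H₀† e_i` squeezes this
between `A` and `B` times `Σ_i ‖H₀† e_i‖²`; the same computation with `f = e` shows that the
latter sum is `Σ_i ‖H₀ e_i‖²`. Working in `ℝ≥0∞` makes the exchange of sums unconditional; the
finiteness statement and both inequalities then follow from the two-sided bound.
-/

open scoped InnerProductSpace ENNReal

section SquareSums

variable {α E : Type*} [NormedAddCommGroup E]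

lemma summable_sq_norm_iff_tsum_enorm_sq_ne_top (g : α → E) :
    Summable (fun a => ‖g a‖ ^ 2) ↔ ∑' a, ‖g a‖ₑ ^ 2 ≠ ∞ := by
  have h : ∀ a, ‖g a‖ₑ ^ 2 = ‖‖g a‖ ^ 2‖ₑ := fun a => by rw [enorm_pow, enorm_norm]
  simp only [h, tsum_enorm_ne_top_iff_summable_norm, norm_pow, norm_norm]

lemma tsum_sq_norm_eq_toReal_tsum_enorm_sq (g : α → E) :
    ∑' a, ‖g a‖ ^ 2 = (∑' a, ‖g a‖ₑ ^ 2).toReal := by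
  rw [ENNReal.tsum_toReal_eq fun a => ENNReal.pow_ne_top enorm_ne_top]
  simp only [ENNReal.toReal_pow, toReal_enorm]

lemma ofReal_tsum_sq_norm {g : α → E} (hg : Summable fun a => ‖g a‖ ^ 2) :
    ENNReal.ofReal (∑' a, ‖g a‖ ^ 2) = ∑' a, ‖g a‖ₑ ^ 2 := by
  rw [tsum_sq_norm_eq_toReal_tsum_enorm_sq,
    ENNReal.ofReal_toReal ((summable_sq_norm_iff_tsum_enorm_sq_ne_top g).1 hg)]

end SquareSums

lemma HilbertBasis.tsum_enorm_inner_sq {𝕜 E ι : Type*} [RCLike 𝕜] [NormedAddCommGroup E]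
    [InnerProductSpace 𝕜 E] (b : HilbertBasis ι 𝕜 E) (x : E) :
    ∑' i, ‖⟪b i, x⟫_𝕜‖ₑ ^ 2 = ‖x‖ₑ ^ 2 := by
  have h := lp.hasSum_norm (p := 2) (by norm_num) (b.repr x)
  simp only [ENNReal.toReal_ofNat, Real.rpow_two, b.repr_apply_apply, b.repr.norm_map] at h
  rw [← ofReal_tsum_sq_norm h.summable, h.tsum_eq, ENNReal.ofReal_pow (norm_nonneg _), ofReal_norm]

section Adjoint

variable {𝕜 E F ι κ : Type*} [RCLike 𝕜] [NormedAddCommGroup E] [InnerProductSpace 𝕜 E]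
  [CompleteSpace E] [NormedAddCommGroup F] [InnerProductSpace 𝕜 F] [CompleteSpace F]

open ContinuousLinearMap

lemma tsum_enorm_sq_apply_eq_tsum_tsum_inner_adjoint (b : HilbertBasis ι 𝕜 F) (T : E →L[𝕜] F)
    (g : κ → E) :
    ∑' k, ‖T (g k)‖ₑ ^ 2 = ∑' i, ∑' k, ‖⟪g k, adjoint T (b i)⟫_𝕜‖ₑ ^ 2 := by
  calc ∑' k, ‖T (g k)‖ₑ ^ 2 = ∑' k, ∑' i, ‖⟪b i, T (g k)⟫_𝕜‖ₑ ^ 2 := by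
        simp only [b.tsum_enorm_inner_sq]
    _ = ∑' i, ∑' k, ‖⟪b i, T (g k)⟫_𝕜‖ₑ ^ 2 := ENNReal.tsum_comm
    _ = ∑' i, ∑' k, ‖⟪g k, adjoint T (b i)⟫_𝕜‖ₑ ^ 2 := by
        simp only [adjoint_inner_right, ← ofReal_norm, norm_inner_symm]

lemma tsum_enorm_sq_apply_hilbertBasis_eq_adjoint {ι' : Type*} (a : HilbertBasis ι 𝕜 E)
    (b : HilbertBasis ι' 𝕜 F) (T : E →L[𝕜] F) :
    ∑' i, ‖T (a i)‖ₑ ^ 2 = ∑' j, ‖adjoint T (b j)‖ₑ ^ 2 := by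
  simp only [tsum_enorm_sq_apply_eq_tsum_tsum_inner_adjoint b T a, a.tsum_enorm_inner_sq]

end Adjoint

lemma ENNReal.sqrt_toReal_ofReal_mul (c : ℝ) (x : ℝ≥0∞) :
    √(ENNReal.ofReal c * x).toReal = √c * √x.toReal := by
  rw [ENNReal.toReal_mul, Real.sqrt_mul' _ ENNReal.toReal_nonneg, ENNReal.toReal_ofReal']
  rcases le_total c 0 with hc | hc
  · simp [hc, Real.sqrt_eq_zero'.2 hc]
  · rw [max_eq_left hc]

lemma ENNReal.sqrt_toReal_bounds_of_sandwich {a b : ℝ} (ha : 0 < a) {x y : ℝ≥0∞}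
    (hlow : ENNReal.ofReal a * x ≤ y) (hup : y ≤ ENNReal.ofReal b * x) :
    (x ≠ ∞ ↔ y ≠ ∞) ∧ √a * √x.toReal ≤ √y.toReal ∧ √y.toReal ≤ √b * √x.toReal := by
  have ha_top : ENNReal.ofReal a * x = ∞ ↔ x = ∞ := by simp [ENNReal.mul_eq_top, ha]
  have hb_top : ENNReal.ofReal b * x = ∞ → x = ∞ := fun h =>
    (by simpa [ENNReal.mul_eq_top] using h : 0 < b ∧ x = ∞).2
  have hx : x = ∞ ↔ y = ∞ :=
    ⟨fun h => top_le_iff.1 (ha_top.2 h ▸ hlow), fun h => hb_top (top_le_iff.1 (h ▸ hup))⟩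
  refine ⟨not_congr hx, ?_, ?_⟩
  · rw [← ENNReal.sqrt_toReal_ofReal_mul]
    exact Real.sqrt_le_sqrt (ENNReal.toReal_mono' hlow fun h => ha_top.2 (hx.2 h))
  · rw [← ENNReal.sqrt_toReal_ofReal_mul]
    exact Real.sqrt_le_sqrt (ENNReal.toReal_mono' hup fun h => hx.1 (hb_top h))

lemma enorm_frame_bounds {𝕜 E κ : Type*} [RCLike 𝕜] [NormedAddCommGroup E]
    [InnerProductSpace 𝕜 E] {f : κ → E} {A B : ℝ} (hA : 0 < A) {x : E}
    (hx : A * ‖x‖ ^ 2 ≤ ∑' k, ‖⟪f k, x⟫_𝕜‖ ^ 2 ∧ ∑' k, ‖⟪f k, x⟫_𝕜‖ ^ 2 ≤ B * ‖x‖ ^ 2) :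
    ENNReal.ofReal A * ‖x‖ₑ ^ 2 ≤ ∑' k, ‖⟪f k, x⟫_𝕜‖ₑ ^ 2 ∧
      ∑' k, ‖⟪f k, x⟫_𝕜‖ₑ ^ 2 ≤ ENNReal.ofReal B * ‖x‖ₑ ^ 2 := by
  rcases eq_or_ne x 0 with rfl | hx0
  · simp
  -- the lower frame bound makes the real sum positive, hence not a junk value
  have hsum : Summable fun k => ‖⟪f k, x⟫_𝕜‖ ^ 2 := by
    by_contra h
    have : 0 < A * ‖x‖ ^ 2 := by positivity
    linarith [hx.1, tsum_eq_zero_of_not_summable h]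
  have hofReal : ∀ c : ℝ, ENNReal.ofReal (c * ‖x‖ ^ 2) = ENNReal.ofReal c * ‖x‖ₑ ^ 2 := fun c => by
    rw [ENNReal.ofReal_mul' (by positivity), ENNReal.ofReal_pow (norm_nonneg _), ofReal_norm]
  rw [← ofReal_tsum_sq_norm hsum, ← hofReal, ← hofReal]
  exact ⟨ENNReal.ofReal_le_ofReal hx.1, ENNReal.ofReal_le_ofReal hx.2⟩

theorem hilbertSchmidt_iff_frame_sum_sq_general
    {H : Type*} [NormedAddCommGroup H] [InnerProductSpace ℂ H] [CompleteSpace H]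
    {ι κ : Type*} (e : HilbertBasis ι ℂ H) (f : κ → H) (A B : ℝ)
    (hA : 0 < A)
    (hframe : ∀ x : H,
      A * ‖x‖ ^ 2 ≤ ∑' k, ‖⟪f k, x⟫_ℂ‖ ^ 2 ∧ ∑' k, ‖⟪f k, x⟫_ℂ‖ ^ 2 ≤ B * ‖x‖ ^ 2)
    (H₀ : H →L[ℂ] H) :
    (Summable (fun i => ‖H₀ (e i)‖ ^ 2) ↔ Summable (fun k => ‖H₀ (f k)‖ ^ 2)) ∧
      Real.sqrt A * Real.sqrt (∑' i, ‖H₀ (e i)‖ ^ 2) ≤ Real.sqrt (∑' k, ‖H₀ (f k)‖ ^ 2) ∧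
      Real.sqrt (∑' k, ‖H₀ (f k)‖ ^ 2) ≤ Real.sqrt B * Real.sqrt (∑' i, ‖H₀ (e i)‖ ^ 2) := by
  have hE := tsum_enorm_sq_apply_hilbertBasis_eq_adjoint e e H₀
  have hF := tsum_enorm_sq_apply_eq_tsum_tsum_inner_adjoint e H₀ f
  have hframe_enorm := fun x => enorm_frame_bounds hA (hframe x)
  have hlow : ENNReal.ofReal A * ∑' i, ‖H₀ (e i)‖ₑ ^ 2 ≤ ∑' k, ‖H₀ (f k)‖ₑ ^ 2 := by
    rw [hE, hF, ← ENNReal.tsum_mul_left]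
    exact ENNReal.tsum_le_tsum fun i => (hframe_enorm _).1
  have hup : ∑' k, ‖H₀ (f k)‖ₑ ^ 2 ≤ ENNReal.ofReal B * ∑' i, ‖H₀ (e i)‖ₑ ^ 2 := by
    rw [hE, hF, ← ENNReal.tsum_mul_left]
    exact ENNReal.tsum_le_tsum fun i => (hframe_enorm _).2
  simpa only [summable_sq_norm_iff_tsum_enorm_sq_ne_top, tsum_sq_norm_eq_toReal_tsum_enorm_sq]
    using ENNReal.sqrt_toReal_bounds_of_sandwich hA hlow hup

/-- A bounded operator `H₀` is Hilbert–Schmidt (i.e. `Σ_i ‖H₀ e_i‖² < ∞` for an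
orthonormal basis `(e i)`) iff `Σ_k ‖H₀ f_k‖² < ∞` for a (hence, as `f` is arbitrary, every)
frame `(f k)`; moreover `√A ‖H₀‖_HS ≤ (Σ_k ‖H₀ f_k‖²)^{1/2} ≤ √B ‖H₀‖_HS`. -/
theorem hilbertSchmidt_iff_frame_sum_sq
    {H : Type*} [NormedAddCommGroup H] [InnerProductSpace ℂ H] [CompleteSpace H]
    {ι κ : Type*} (e : HilbertBasis ι ℂ H) (f : κ → H) (A B : ℝ)
    (hA : 0 < A) (hB : 0 < B)
    (hframe : ∀ x : H,
      A * ‖x‖ ^ 2 ≤ ∑' k, ‖⟪f k, x⟫_ℂ‖ ^ 2 ∧ ∑' k, ‖⟪f k, x⟫_ℂ‖ ^ 2 ≤ B * ‖x‖ ^ 2)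
    (H₀ : H →L[ℂ] H) :
    (Summable (fun i => ‖H₀ (e i)‖ ^ 2) ↔ Summable (fun k => ‖H₀ (f k)‖ ^ 2)) ∧
      Real.sqrt A * Real.sqrt (∑' i, ‖H₀ (e i)‖ ^ 2) ≤ Real.sqrt (∑' k, ‖H₀ (f k)‖ ^ 2) ∧
      Real.sqrt (∑' k, ‖H₀ (f k)‖ ^ 2) ≤ Real.sqrt B * Real.sqrt (∑' i, ‖H₀ (e i)‖ ^ 2) :=
  hilbertSchmidt_iff_frame_sum_sq_general e f A B hA hframe H₀
end

section
/- If (g_k)_{k∈K} is a Bessel sequence in H₁ with bound B and (f_i)_{i∈I} is a Bessel sequence in H₂ with bound B', then the family (f_i ⊗ ḡ_k)_{(i,k)∈I×K} is a Bessel sequence in the Hilbert space HS(H₁, H₂) with bound B·B', i.e. Σ_{i,k} |⟨T, f_i ⊗ ḡ_k⟩_HS|² ≤ B·B'·‖T‖_HS² for all T ∈ HS(H₁, H₂). -/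
/-!
The Hilbert–Schmidt coefficient `⟨T, f i ⊗ ḡ k⟩` equals `⟪f i, T (g k)⟫ = ⟪g k, T† (f i)⟫`.
Summing over `k` with the Bessel bound of `g` at `T† (f i)` gives `B ‖T† (f i)‖²`, and
`∑ i ‖T† (f i)‖² = ∑ j ∑ i ‖⟪f i, T (b j)⟫‖² ≤ B' ∑ j ‖T (b j)‖²` for a Hilbert basis `b`.

The Bessel hypotheses are stated with `tsum`, which is `0` on non-summable families, so they
only bound sums already known to converge. When the double sum converges, its slices make the
`f`-sums at every `T (g k)` converge; the resulting bounds on finite partial sums pass to the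
span of the `g k` and, being closed conditions, to its closure `V`. So the estimate is run for
`T` restricted to `V`, whose Hilbert–Schmidt norm is at most that of `T`.
-/

open scoped InnerProductSpace

/-- The rank-one operator `f ⊗ ḡ : h ↦ ⟨h,g⟩ f` (paper convention), i.e. `h ↦ ⟪g, h⟫_ℂ • f`. -/
noncomputable def rankOne {H₁ H₂ : Type*} [NormedAddCommGroup H₁] [InnerProductSpace ℂ H₁]
    [NormedAddCommGroup H₂] [InnerProductSpace ℂ H₂] (f : H₂) (g : H₁) : H₁ →L[ℂ] H₂ :=
  (innerSL ℂ g).smulRight f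

open Set Submodule ContinuousLinearMap

section

variable {𝕜 E F ι κ I K : Type*} [RCLike 𝕜] [NormedAddCommGroup E] [InnerProductSpace 𝕜 E]
  [NormedAddCommGroup F] [InnerProductSpace 𝕜 F]

theorem HilbertBasis.hasSum_norm_inner_sq (b : HilbertBasis ι 𝕜 E) (x : E) :
    HasSum (fun i => ‖⟪b i, x⟫_𝕜‖ ^ 2) (‖x‖ ^ 2) := by
  simpa [b.repr_apply_apply] using lp.hasSum_norm (p := 2) (by norm_num) (b.repr x)

variable (𝕜) in
def squareSummableCoeffs (f : I → E) : Submodule 𝕜 E where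
  carrier := {y | Memℓp (fun i => ⟪f i, y⟫_𝕜) 2}
  add_mem' {x y} hx hy := by
    show Memℓp _ 2
    simp only [inner_add_right]
    exact hx.add hy
  zero_mem' := by
    show Memℓp _ 2
    simp only [inner_zero_right]
    exact zero_memℓp
  smul_mem' c y hy := by
    show Memℓp _ 2
    simp only [inner_smul_right]
    exact hy.const_smul c

theorem mem_squareSummableCoeffs {f : I → E} {y : E} :
    y ∈ squareSummableCoeffs 𝕜 f ↔ Summable fun i => ‖⟪f i, y⟫_𝕜‖ ^ 2 := by
  simp [squareSummableCoeffs, memℓp_gen_iff]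

theorem sum_norm_inner_sq_le_of_mem_closure {f : I → E} {B : ℝ}
    (hf : ∀ y, ∑' i, ‖⟪f i, y⟫_𝕜‖ ^ 2 ≤ B * ‖y‖ ^ 2) (A : Finset I) {y : E}
    (hy : y ∈ closure (squareSummableCoeffs 𝕜 f : Set E)) :
    ∑ i ∈ A, ‖⟪f i, y⟫_𝕜‖ ^ 2 ≤ B * ‖y‖ ^ 2 := by
  have hclosed : IsClosed {y : E | ∑ i ∈ A, ‖⟪f i, y⟫_𝕜‖ ^ 2 ≤ B * ‖y‖ ^ 2} :=
    isClosed_le (by fun_prop) (by fun_prop)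
  refine closure_minimal (fun x hx => ?_) hclosed hy
  exact (Summable.sum_le_tsum A (fun i _ => by positivity)
    (mem_squareSummableCoeffs.mp hx)).trans (hf x)

theorem apply_mem_closure_squareSummableCoeffs {T : E →L[𝕜] F} {g : K → E} {f : I → F}
    (hF : Summable fun p : I × K => ‖⟪f p.1, T (g p.2)⟫_𝕜‖ ^ 2) {x : E}
    (hx : x ∈ (span 𝕜 (range g)).topologicalClosure) :
    T x ∈ closure (squareSummableCoeffs 𝕜 f : Set F) := by
  have hspan : span 𝕜 (range g) ≤ (squareSummableCoeffs 𝕜 f).comap (T : E →ₗ[𝕜] F) := by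
    refine span_le.mpr ?_
    rintro _ ⟨k, rfl⟩
    rw [SetLike.mem_coe, mem_comap, ContinuousLinearMap.coe_coe, mem_squareSummableCoeffs]
    exact hF.prod_symm.prod_factor k
  rw [← SetLike.mem_coe, topologicalClosure_coe] at hx
  exact map_mem_closure T.continuous hx fun y hy => hspan hy

variable [CompleteSpace E] [CompleteSpace F]

theorem HilbertBasis.hasSum_norm_inner_apply_sq (b : HilbertBasis ι 𝕜 E) (T : E →L[𝕜] F)
    (y : F) : HasSum (fun j => ‖⟪y, T (b j)⟫_𝕜‖ ^ 2) (‖adjoint T y‖ ^ 2) := by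
  convert b.hasSum_norm_inner_sq (adjoint T y) using 2 with j
  rw [adjoint_inner_right, norm_inner_symm]

theorem HilbertBasis.hasSum_norm_adjoint_apply_sq (e : HilbertBasis ι 𝕜 E)
    (v : HilbertBasis κ 𝕜 F) {T : E →L[𝕜] F} {s : ℝ} (hT : HasSum (fun j => ‖T (e j)‖ ^ 2) s) :
    HasSum (fun j => ‖adjoint T (v j)‖ ^ 2) s := by
  have hrow : ∀ j, HasSum (fun j' => ‖⟪v j', T (e j)⟫_𝕜‖ ^ 2) (‖T (e j)‖ ^ 2) := fun j =>
    v.hasSum_norm_inner_sq _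
  have hsum : Summable fun p : ι × κ => ‖⟪v p.2, T (e p.1)⟫_𝕜‖ ^ 2 :=
    (summable_prod_of_nonneg fun _ => by positivity).mpr
      ⟨fun j => (hrow j).summable, hT.summable.congr fun j => (hrow j).tsum_eq.symm⟩
  have htotal : HasSum (fun p : ι × κ => ‖⟪v p.2, T (e p.1)⟫_𝕜‖ ^ 2) s := by
    convert hsum.hasSum using 1
    rw [hsum.tsum_prod, ← hT.tsum_eq]
    exact tsum_congr fun j => (hrow j).tsum_eq.symm
  exact ((Equiv.prodComm κ ι).hasSum_iff.mpr htotal).prod_fiberwise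
    fun j' => e.hasSum_norm_inner_apply_sq T (v j')

theorem Orthonormal.sum_norm_apply_sq_le (e : HilbertBasis ι 𝕜 E) {T : E →L[𝕜] F}
    (hT : Summable fun j => ‖T (e j)‖ ^ 2) {z : κ → E} (hz : Orthonormal 𝕜 z) (S : Finset κ) :
    ∑ t ∈ S, ‖T (z t)‖ ^ 2 ≤ ∑' j, ‖T (e j)‖ ^ 2 := by
  obtain ⟨_, v, -⟩ := exists_hilbertBasis 𝕜 F
  have hadj := e.hasSum_norm_adjoint_apply_sq v hT.hasSum
  have hrow : ∀ t, HasSum (fun j => ‖⟪v j, T (z t)⟫_𝕜‖ ^ 2) (‖T (z t)‖ ^ 2) := fun t =>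
    v.hasSum_norm_inner_sq _
  calc ∑ t ∈ S, ‖T (z t)‖ ^ 2 = ∑' j, ∑ t ∈ S, ‖⟪v j, T (z t)⟫_𝕜‖ ^ 2 := by
        rw [Summable.tsum_finsetSum fun t _ => (hrow t).summable]
        exact Finset.sum_congr rfl fun t _ => (hrow t).tsum_eq.symm
    _ ≤ ∑' j, ‖adjoint T (v j)‖ ^ 2 := by
        refine Summable.tsum_le_tsum (fun j => ?_) (summable_sum fun t _ => (hrow t).summable)
          hadj.summable
        calc ∑ t ∈ S, ‖⟪v j, T (z t)⟫_𝕜‖ ^ 2 = ∑ t ∈ S, ‖⟪z t, adjoint T (v j)⟫_𝕜‖ ^ 2 := by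
              simp only [adjoint_inner_right, norm_inner_symm (v j)]
          _ ≤ ‖adjoint T (v j)‖ ^ 2 := hz.sum_inner_products_le _
    _ = ∑' j, ‖T (e j)‖ ^ 2 := hadj.tsum_eq

theorem HilbertBasis.sum_norm_adjoint_apply_sq_le (b : HilbertBasis ι 𝕜 E) {T : E →L[𝕜] F}
    (hT : Summable fun j => ‖T (b j)‖ ^ 2) {f : I → F} {B' : ℝ} (A : Finset I)
    (hfT : ∀ x, ∑ i ∈ A, ‖⟪f i, T x⟫_𝕜‖ ^ 2 ≤ B' * ‖T x‖ ^ 2) :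
    ∑ i ∈ A, ‖adjoint T (f i)‖ ^ 2 ≤ B' * ∑' j, ‖T (b j)‖ ^ 2 := by
  have hrow := fun i => b.hasSum_norm_inner_apply_sq T (f i)
  calc ∑ i ∈ A, ‖adjoint T (f i)‖ ^ 2 = ∑' j, ∑ i ∈ A, ‖⟪f i, T (b j)⟫_𝕜‖ ^ 2 := by
        rw [Summable.tsum_finsetSum fun i _ => (hrow i).summable]
        exact Finset.sum_congr rfl fun i _ => (hrow i).tsum_eq.symm
    _ ≤ ∑' j, B' * ‖T (b j)‖ ^ 2 :=
        Summable.tsum_le_tsum (fun j => hfT (b j)) (summable_sum fun i _ => (hrow i).summable)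
          (hT.mul_left B')
    _ = B' * ∑' j, ‖T (b j)‖ ^ 2 := tsum_mul_left

theorem HilbertBasis.tsum_norm_inner_apply_sq_le (b : HilbertBasis ι 𝕜 E) {T : E →L[𝕜] F}
    (hT : Summable fun j => ‖T (b j)‖ ^ 2) {g : K → E} {f : I → F} {B B' : ℝ} (hB : 0 ≤ B)
    (hg : ∀ x, ∑' k, ‖⟪g k, x⟫_𝕜‖ ^ 2 ≤ B * ‖x‖ ^ 2)
    (hfT : ∀ (A : Finset I) x, ∑ i ∈ A, ‖⟪f i, T x⟫_𝕜‖ ^ 2 ≤ B' * ‖T x‖ ^ 2)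
    (hF : Summable fun p : I × K => ‖⟪f p.1, T (g p.2)⟫_𝕜‖ ^ 2) :
    ∑' p : I × K, ‖⟪f p.1, T (g p.2)⟫_𝕜‖ ^ 2 ≤ B * B' * ∑' j, ‖T (b j)‖ ^ 2 := by
  rw [hF.tsum_prod]
  refine hF.prod.tsum_le_of_sum_le fun A => ?_
  calc ∑ i ∈ A, ∑' k, ‖⟪f i, T (g k)⟫_𝕜‖ ^ 2
        = ∑ i ∈ A, ∑' k, ‖⟪g k, adjoint T (f i)⟫_𝕜‖ ^ 2 := by
        simp only [adjoint_inner_right, norm_inner_symm (T _)]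
    _ ≤ ∑ i ∈ A, B * ‖adjoint T (f i)‖ ^ 2 := Finset.sum_le_sum fun i _ => hg _
    _ = B * ∑ i ∈ A, ‖adjoint T (f i)‖ ^ 2 := (Finset.mul_sum _ _ _).symm
    _ ≤ B * (B' * ∑' j, ‖T (b j)‖ ^ 2) :=
        mul_le_mul_of_nonneg_left (b.sum_norm_adjoint_apply_sq_le hT A (hfT A)) hB
    _ = B * B' * ∑' j, ‖T (b j)‖ ^ 2 := (mul_assoc _ _ _).symm

theorem HilbertBasis.tsum_inner_rankOne_apply {H₁ H₂ : Type*} [NormedAddCommGroup H₁]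
    [InnerProductSpace ℂ H₁] [CompleteSpace H₁] [NormedAddCommGroup H₂] [InnerProductSpace ℂ H₂]
    [CompleteSpace H₂] (e : HilbertBasis ι ℂ H₁) (f : H₂) (g : H₁) (T : H₁ →L[ℂ] H₂) :
    ∑' j, ⟪rankOne f g (e j), T (e j)⟫_ℂ = ⟪f, T g⟫_ℂ := by
  have hterm : ∀ j, ⟪rankOne f g (e j), T (e j)⟫_ℂ = ⟪adjoint T f, e j⟫_ℂ * ⟪e j, g⟫_ℂ := by
    intro j
    simp only [rankOne, smulRight_apply, innerSL_apply_apply, inner_smul_left,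
      adjoint_inner_left, inner_conj_symm]
    ring
  rw [tsum_congr hterm, e.tsum_inner_mul_inner, adjoint_inner_left]

end

/-- `⟨S, T⟩_HS` and `‖T‖_HS²` are written out through the Hilbert basis `e` of `H₁`. -/
theorem tensor_bessel
    {H₁ H₂ : Type*} [NormedAddCommGroup H₁] [InnerProductSpace ℂ H₁] [CompleteSpace H₁]
    [NormedAddCommGroup H₂] [InnerProductSpace ℂ H₂] [CompleteSpace H₂]
    {ι I K : Type*} (e : HilbertBasis ι ℂ H₁)
    (g : K → H₁) (f : I → H₂) (B B' : ℝ) (hB : 0 < B) (hB' : 0 < B')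
    (hg : ∀ x : H₁, ∑' k, ‖⟪g k, x⟫_ℂ‖ ^ 2 ≤ B * ‖x‖ ^ 2)
    (hf : ∀ y : H₂, ∑' i, ‖⟪f i, y⟫_ℂ‖ ^ 2 ≤ B' * ‖y‖ ^ 2)
    (T : H₁ →L[ℂ] H₂) (hT : Summable fun j => ‖T (e j)‖ ^ 2) :
    ∑' p : I × K, ‖∑' j, ⟪(rankOne (f p.1) (g p.2)) (e j), T (e j)⟫_ℂ‖ ^ 2 ≤
      B * B' * ∑' j, ‖T (e j)‖ ^ 2 := by
  simp only [e.tsum_inner_rankOne_apply]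
  by_cases hF : Summable fun p : I × K => ‖⟪f p.1, T (g p.2)⟫_ℂ‖ ^ 2
  swap
  · rw [tsum_eq_zero_of_not_summable hF]
    exact mul_nonneg (by positivity) (tsum_nonneg fun _ => by positivity)
  set V := (span ℂ (range g)).topologicalClosure
  obtain ⟨_, b, -⟩ := exists_hilbertBasis ℂ V
  have hTb : ∀ S, ∑ t ∈ S, ‖T (b t)‖ ^ 2 ≤ ∑' j, ‖T (e j)‖ ^ 2 :=
    (b.orthonormal.comp_linearIsometry V.subtypeₗᵢ).sum_norm_apply_sq_le e hT
  have hfV : ∀ (A : Finset I) (x : V), ∑ i ∈ A, ‖⟪f i, T x⟫_ℂ‖ ^ 2 ≤ B' * ‖T x‖ ^ 2 :=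
    fun A x => sum_norm_inner_sq_le_of_mem_closure hf A
      (apply_mem_closure_squareSummableCoeffs hF x.2)
  calc ∑' p : I × K, ‖⟪f p.1, T (g p.2)⟫_ℂ‖ ^ 2 ≤ B * B' * ∑' t, ‖T (b t)‖ ^ 2 :=
        b.tsum_norm_inner_apply_sq_le (T := T ∘L V.subtypeL)
          (summable_of_sum_le (fun _ => by positivity) hTb)
          (g := fun k => ⟨g k, subset_closure (subset_span (mem_range_self k))⟩) hB.le
          (fun x => hg x) hfV hF
    _ ≤ B * B' * ∑' j, ‖T (e j)‖ ^ 2 := by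
        gcongr
        exact tsum_le_of_sum_le' (tsum_nonneg fun _ => by positivity) hTb
end

section
/- If (g_k) is a frame for H₁ with canonical dual (g̃_k) and (f_i) is a frame for H₂ with canonical dual (f̃_i), then (f̃_i ⊗ (g̃_k)‾)_{(i,k)} is a dual frame of (f_i ⊗ ḡ_k) in HS(H₁, H₂), i.e. every T ∈ HS(H₁,H₂) satisfies T = Σ_{i,k} ⟨T, f_i ⊗ ḡ_k⟩_HS · (f̃_i ⊗ (g̃_k)‾). -/
set_option maxHeartbeats 1000000


open scoped InnerProductSpace

/-- Finite Cauchy–Schwarz in `ℝ`. -/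
lemma sum_mul_le_sqrt_mul_sqrt {K : Type*} (s : Finset K) (a b : K → ℝ)
    (ha : ∀ k, 0 ≤ a k) (hb : ∀ k, 0 ≤ b k) :
    ∑ k ∈ s, a k * b k ≤ Real.sqrt (∑ k ∈ s, a k ^ 2) * Real.sqrt (∑ k ∈ s, b k ^ 2) := by
  rw [← Real.sqrt_mul (by positivity : (0:ℝ) ≤ ∑ k ∈ s, a k ^ 2)]
  have h2 : (0:ℝ) ≤ (∑ k ∈ s, a k ^ 2) * ∑ k ∈ s, b k ^ 2 := by positivity
  have h3 : (0:ℝ) ≤ ∑ k ∈ s, a k * b k := Finset.sum_nonneg fun k _ => mul_nonneg (ha k) (hb k)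
  exact (Real.le_sqrt h3 h2).mpr (Finset.sum_mul_sq_le_sq_mul_sq s a b)

lemma frame_summable {H : Type*} [NormedAddCommGroup H] [InnerProductSpace ℂ H] {K : Type*}
    (g : K → H) (A : ℝ) (hA : 0 < A)
    (hlow : ∀ x : H, A * ‖x‖ ^ 2 ≤ ∑' k, ‖⟪g k, x⟫_ℂ‖ ^ 2) (x : H) :
    Summable fun k => ‖⟪g k, x⟫_ℂ‖ ^ 2 := by
  by_cases hx : x = 0
  · simpa [hx] using summable_zero
  · by_contra h
    have h1 := hlow x
    rw [tsum_eq_zero_of_not_summable h] at h1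
    have h2 : 0 < A * ‖x‖ ^ 2 := by
      have := norm_pos_iff.mpr hx
      positivity
    linarith

lemma frame_finset_bound {H : Type*} [NormedAddCommGroup H] [InnerProductSpace ℂ H] {K : Type*}
    (g : K → H) (A B : ℝ) (hA : 0 < A)
    (hg : ∀ x : H,
      A * ‖x‖ ^ 2 ≤ ∑' k, ‖⟪g k, x⟫_ℂ‖ ^ 2 ∧ ∑' k, ‖⟪g k, x⟫_ℂ‖ ^ 2 ≤ B * ‖x‖ ^ 2)
    (s : Finset K) (x : H) :
    ∑ k ∈ s, ‖⟪g k, x⟫_ℂ‖ ^ 2 ≤ B * ‖x‖ ^ 2 :=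
  (Summable.sum_le_tsum s (fun _ _ => by positivity)
    (frame_summable g A hA (fun y => (hg y).1) x)).trans (hg x).2

/-- Finite synthesis bound. -/
lemma synth_finset_bound {H : Type*} [NormedAddCommGroup H] [InnerProductSpace ℂ H] {K : Type*}
    (g : K → H) (B : ℝ) (hB : 0 ≤ B)
    (hBdd : ∀ (s : Finset K) (x : H), ∑ k ∈ s, ‖⟪g k, x⟫_ℂ‖ ^ 2 ≤ B * ‖x‖ ^ 2)
    (c : K → ℂ) (s : Finset K) :
    ‖∑ k ∈ s, c k • g k‖ ≤ Real.sqrt (B * ∑ k ∈ s, ‖c k‖ ^ 2) := by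
  set v := ∑ k ∈ s, c k • g k with hv
  have e1 : ⟪v, v⟫_ℂ = ∑ k ∈ s, (starRingEnd ℂ) (c k) * ⟪g k, v⟫_ℂ := by
    rw [hv, sum_inner]
    exact Finset.sum_congr rfl fun k _ => inner_smul_left _ _ _
  have e2 : ‖v‖ ^ 2 = ‖⟪v, v⟫_ℂ‖ := by
    rw [inner_self_eq_norm_sq_to_K]
    simp
  have e3 : ‖v‖ ^ 2 ≤ ∑ k ∈ s, ‖c k‖ * ‖⟪g k, v⟫_ℂ‖ := by
    rw [e2, e1]
    refine (norm_sum_le _ _).trans (le_of_eq (Finset.sum_congr rfl fun k _ => ?_))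
    rw [norm_mul, RCLike.norm_conj]
  have CS : ∑ k ∈ s, ‖c k‖ * ‖⟪g k, v⟫_ℂ‖ ≤
      Real.sqrt (∑ k ∈ s, ‖c k‖ ^ 2) * Real.sqrt (∑ k ∈ s, ‖⟪g k, v⟫_ℂ‖ ^ 2) :=
    sum_mul_le_sqrt_mul_sqrt s (fun k => ‖c k‖) (fun k => ‖⟪g k, v⟫_ℂ‖)
      (fun k => norm_nonneg _) (fun k => norm_nonneg _)
  have key : ‖v‖ ^ 2 ≤ Real.sqrt (∑ k ∈ s, ‖c k‖ ^ 2) * (Real.sqrt B * ‖v‖) := by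
    refine (e3.trans CS).trans ?_
    gcongr
    calc Real.sqrt (∑ k ∈ s, ‖⟪g k, v⟫_ℂ‖ ^ 2) ≤ Real.sqrt (B * ‖v‖ ^ 2) :=
        Real.sqrt_le_sqrt (hBdd s v)
      _ = Real.sqrt B * ‖v‖ := by
        rw [Real.sqrt_mul hB, Real.sqrt_sq (norm_nonneg _)]
  rw [Real.sqrt_mul hB, mul_comm (Real.sqrt B)]
  rcases eq_or_lt_of_le (norm_nonneg v) with h0 | h0
  · rw [← h0]; positivity
  · have h2 : ‖v‖ * ‖v‖ ≤ (Real.sqrt (∑ k ∈ s, ‖c k‖ ^ 2) * Real.sqrt B) * ‖v‖ := by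
      rw [pow_two] at key; linarith [key]
    exact le_of_mul_le_mul_right h2 h0

lemma summable_of_sq_bound {X : Type*} [NormedAddCommGroup X] [CompleteSpace X] {β : Type*}
    (F : β → X) (h : β → ℝ) (hh : ∀ b, 0 ≤ h b) (hs : Summable h) (C : ℝ) (hC : 0 ≤ C)
    (hb : ∀ t : Finset β, ‖∑ b ∈ t, F b‖ ≤ Real.sqrt (C * ∑ b ∈ t, h b)) :
    Summable F := by
  rw [summable_iff_vanishing]
  intro U hU
  obtain ⟨ε, hε, hsub⟩ := Metric.mem_nhds_iff.mp hU
  have hδ : 0 < ε ^ 2 / (C + 1) := by positivity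
  obtain ⟨s, hs'⟩ := summable_iff_vanishing.mp hs (Metric.ball 0 (ε ^ 2 / (C + 1)))
    (Metric.ball_mem_nhds 0 hδ)
  refine ⟨s, fun t ht => hsub ?_⟩
  have h1 := hs' t ht
  rw [Metric.mem_ball, dist_zero_right, Real.norm_eq_abs] at h1
  have h2 : ∑ b ∈ t, h b < ε ^ 2 / (C + 1) := lt_of_le_of_lt (le_abs_self _) h1
  rw [Metric.mem_ball, dist_zero_right]
  refine lt_of_le_of_lt (hb t) ?_
  have h3 : C * ∑ b ∈ t, h b < ε ^ 2 := by
    rcases eq_or_lt_of_le hC with h0 | h0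
    · rw [← h0]; simpa using pow_pos hε 2
    · calc C * ∑ b ∈ t, h b ≤ C * (ε ^ 2 / (C + 1)) := by
            have := Finset.sum_nonneg (fun b (_ : b ∈ t) => hh b)
            nlinarith
        _ < ε ^ 2 := by
            rw [mul_div_assoc', div_lt_iff₀ (by linarith)]
            nlinarith
  calc Real.sqrt (C * ∑ b ∈ t, h b) < Real.sqrt (ε ^ 2) :=
        Real.sqrt_lt_sqrt (mul_nonneg hC (Finset.sum_nonneg fun b _ => hh b)) h3
    _ = ε := Real.sqrt_sq hε.le

/-- Parseval for a Hilbert basis, real form. -/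
lemma hilbertBasis_parseval {E : Type*} [NormedAddCommGroup E] [InnerProductSpace ℂ E]
    {ι : Type*} (b : HilbertBasis ι ℂ E) (x : E) :
    HasSum (fun i => ‖⟪b i, x⟫_ℂ‖ ^ 2) (‖x‖ ^ 2) := by
  have h := b.hasSum_inner_mul_inner x x
  rw [← Complex.hasSum_ofReal]
  have e1 : ∀ i, ⟪x, b i⟫_ℂ * ⟪b i, x⟫_ℂ = ((‖⟪b i, x⟫_ℂ‖ ^ 2 : ℝ) : ℂ) := by
    intro i
    rw [← inner_conj_symm x (b i), RCLike.conj_mul]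
    norm_cast
  have e2 : ⟪x, x⟫_ℂ = ((‖x‖ ^ 2 : ℝ) : ℂ) := by
    rw [inner_self_eq_norm_sq_to_K]; norm_cast
  rw [← e2]
  rwa [funext e1] at h

/-- Rectangle estimate for finite sums of weighted rank-one terms. -/
lemma rankOne_finset_bound {H₁ H₂ : Type*} [NormedAddCommGroup H₁] [InnerProductSpace ℂ H₁]
    [NormedAddCommGroup H₂] [InnerProductSpace ℂ H₂] {I K : Type*}
    (gt : K → H₁) (ft : I → H₂) (Bg Bf : ℝ) (hBg : 0 ≤ Bg) (hBf : 0 ≤ Bf)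
    (hgb : ∀ (s : Finset K) (x : H₁), ∑ k ∈ s, ‖⟪gt k, x⟫_ℂ‖ ^ 2 ≤ Bg * ‖x‖ ^ 2)
    (hfb : ∀ (s : Finset I) (y : H₂), ∑ i ∈ s, ‖⟪ft i, y⟫_ℂ‖ ^ 2 ≤ Bf * ‖y‖ ^ 2)
    (c : I × K → ℂ) (t : Finset (I × K)) (x : H₁) :
    ‖∑ p ∈ t, (c p * ⟪gt p.2, x⟫_ℂ) • ft p.1‖ ≤
      Real.sqrt ((Bg * Bf) * ∑ p ∈ t, ‖c p‖ ^ 2) * ‖x‖ := by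
  classical
  set v := ∑ p ∈ t, (c p * ⟪gt p.2, x⟫_ℂ) • ft p.1 with hv
  have e1 : ⟪v, v⟫_ℂ = ∑ p ∈ t, (starRingEnd ℂ) (c p * ⟪gt p.2, x⟫_ℂ) * ⟪ft p.1, v⟫_ℂ := by
    rw [hv, sum_inner]
    exact Finset.sum_congr rfl fun p _ => inner_smul_left _ _ _
  have e2 : ‖v‖ ^ 2 = ‖⟪v, v⟫_ℂ‖ := by
    rw [inner_self_eq_norm_sq_to_K]
    simp
  have e3 : ‖v‖ ^ 2 ≤ ∑ p ∈ t, ‖c p‖ * (‖⟪gt p.2, x⟫_ℂ‖ * ‖⟪ft p.1, v⟫_ℂ‖) := by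
    rw [e2, e1]
    refine (norm_sum_le _ _).trans (le_of_eq (Finset.sum_congr rfl fun p _ => ?_))
    rw [norm_mul, RCLike.norm_conj, norm_mul, mul_assoc]
  have CS := sum_mul_le_sqrt_mul_sqrt t (fun p => ‖c p‖)
      (fun p => ‖⟪gt p.2, x⟫_ℂ‖ * ‖⟪ft p.1, v⟫_ℂ‖) (fun p => norm_nonneg _)
      (fun p => mul_nonneg (norm_nonneg _) (norm_nonneg _))
  have rect : ∑ p ∈ t, (‖⟪gt p.2, x⟫_ℂ‖ * ‖⟪ft p.1, v⟫_ℂ‖) ^ 2 ≤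
      (Bg * ‖x‖ ^ 2) * (Bf * ‖v‖ ^ 2) := by
    calc ∑ p ∈ t, (‖⟪gt p.2, x⟫_ℂ‖ * ‖⟪ft p.1, v⟫_ℂ‖) ^ 2
        ≤ ∑ p ∈ t.image Prod.fst ×ˢ t.image Prod.snd,
            (‖⟪gt p.2, x⟫_ℂ‖ * ‖⟪ft p.1, v⟫_ℂ‖) ^ 2 :=
          Finset.sum_le_sum_of_subset_of_nonneg Finset.subset_product
            (fun p _ _ => by positivity)
      _ = ∑ i ∈ t.image Prod.fst, ∑ k ∈ t.image Prod.snd,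
            ‖⟪ft i, v⟫_ℂ‖ ^ 2 * ‖⟪gt k, x⟫_ℂ‖ ^ 2 := by
          rw [Finset.sum_product]
          exact Finset.sum_congr rfl fun i _ => Finset.sum_congr rfl fun k _ => by ring
      _ ≤ ∑ i ∈ t.image Prod.fst, ‖⟪ft i, v⟫_ℂ‖ ^ 2 * (Bg * ‖x‖ ^ 2) := by
          refine Finset.sum_le_sum fun i _ => ?_
          rw [← Finset.mul_sum]
          exact mul_le_mul_of_nonneg_left (hgb _ x) (by positivity)
      _ = (∑ i ∈ t.image Prod.fst, ‖⟪ft i, v⟫_ℂ‖ ^ 2) * (Bg * ‖x‖ ^ 2) := by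
          rw [Finset.sum_mul]
      _ ≤ (Bf * ‖v‖ ^ 2) * (Bg * ‖x‖ ^ 2) :=
          mul_le_mul_of_nonneg_right (hfb _ v) (by positivity)
      _ = (Bg * ‖x‖ ^ 2) * (Bf * ‖v‖ ^ 2) := by ring
  have key : ‖v‖ ^ 2 ≤ (Real.sqrt ((Bg * Bf) * ∑ p ∈ t, ‖c p‖ ^ 2) * ‖x‖) * ‖v‖ := by
    refine (e3.trans CS).trans ?_
    have h4 : Real.sqrt (∑ p ∈ t, (‖⟪gt p.2, x⟫_ℂ‖ * ‖⟪ft p.1, v⟫_ℂ‖) ^ 2)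
        ≤ Real.sqrt ((Bg * ‖x‖ ^ 2) * (Bf * ‖v‖ ^ 2)) := Real.sqrt_le_sqrt rect
    have h5 : Real.sqrt ((Bg * ‖x‖ ^ 2) * (Bf * ‖v‖ ^ 2)) =
        Real.sqrt (Bg * Bf) * (‖x‖ * ‖v‖) := by
      rw [show (Bg * ‖x‖ ^ 2) * (Bf * ‖v‖ ^ 2) = (Bg * Bf) * (‖x‖ * ‖v‖) ^ 2 by ring,
        Real.sqrt_mul (mul_nonneg hBg hBf),
        Real.sqrt_sq (mul_nonneg (norm_nonneg _) (norm_nonneg _))]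
    calc Real.sqrt (∑ p ∈ t, ‖c p‖ ^ 2) *
          Real.sqrt (∑ p ∈ t, (‖⟪gt p.2, x⟫_ℂ‖ * ‖⟪ft p.1, v⟫_ℂ‖) ^ 2)
        ≤ Real.sqrt (∑ p ∈ t, ‖c p‖ ^ 2) * (Real.sqrt (Bg * Bf) * (‖x‖ * ‖v‖)) :=
          mul_le_mul_of_nonneg_left (h4.trans_eq h5) (Real.sqrt_nonneg _)
      _ = (Real.sqrt ((Bg * Bf) * ∑ p ∈ t, ‖c p‖ ^ 2) * ‖x‖) * ‖v‖ := by
          rw [Real.sqrt_mul (mul_nonneg hBg hBf)]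
          ring
  rcases eq_or_lt_of_le (norm_nonneg v) with h0 | h0
  · rw [← h0]; positivity
  · have h2 : ‖v‖ * ‖v‖ ≤ (Real.sqrt ((Bg * Bf) * ∑ p ∈ t, ‖c p‖ ^ 2) * ‖x‖) * ‖v‖ := by
      rw [pow_two] at key; linarith
    exact le_of_mul_le_mul_right h2 h0

/-- If `(g k)` is a frame for `H₁` with canonical dual `(S_g⁻¹ g k)` and `(f i)` a
frame for `H₂` with canonical dual `(S_f⁻¹ f i)`, then `(S_f⁻¹ f i ⊗ (S_g⁻¹ g k)‾)` is a dual
frame of `(f i ⊗ ḡ k)` in `HS(H₁, H₂)`: every Hilbert–Schmidt `T` satisfies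
`T = Σ_{i,k} ⟨T, f_i ⊗ ḡ_k⟩_HS · (S_f⁻¹ f_i ⊗ (S_g⁻¹ g_k)‾)`, the HS inner product being
computed via an orthonormal basis `(e j)` of `H₁`. -/
theorem tensor_canonical_dual_expansion
    {H₁ H₂ : Type*} [NormedAddCommGroup H₁] [InnerProductSpace ℂ H₁] [CompleteSpace H₁]
    [NormedAddCommGroup H₂] [InnerProductSpace ℂ H₂] [CompleteSpace H₂]
    {ι I K : Type*} (e : HilbertBasis ι ℂ H₁)
    (g : K → H₁) (f : I → H₂) (A B A' B' : ℝ)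
    (hA : 0 < A) (hB : 0 < B) (hA' : 0 < A') (hB' : 0 < B')
    (hg : ∀ x : H₁,
      A * ‖x‖ ^ 2 ≤ ∑' k, ‖⟪g k, x⟫_ℂ‖ ^ 2 ∧ ∑' k, ‖⟪g k, x⟫_ℂ‖ ^ 2 ≤ B * ‖x‖ ^ 2)
    (hf : ∀ y : H₂,
      A' * ‖y‖ ^ 2 ≤ ∑' i, ‖⟪f i, y⟫_ℂ‖ ^ 2 ∧ ∑' i, ‖⟪f i, y⟫_ℂ‖ ^ 2 ≤ B' * ‖y‖ ^ 2)
    -- the frame operators and their inverses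
    (Sg Sginv : H₁ →L[ℂ] H₁) (hSg : ∀ x : H₁, Sg x = ∑' k, ⟪g k, x⟫_ℂ • g k)
    (hSg1 : Sg.comp Sginv = ContinuousLinearMap.id ℂ H₁)
    (hSg2 : Sginv.comp Sg = ContinuousLinearMap.id ℂ H₁)
    (Sf Sfinv : H₂ →L[ℂ] H₂) (hSf : ∀ y : H₂, Sf y = ∑' i, ⟪f i, y⟫_ℂ • f i)
    (hSf1 : Sf.comp Sfinv = ContinuousLinearMap.id ℂ H₂)
    (hSf2 : Sfinv.comp Sf = ContinuousLinearMap.id ℂ H₂)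
    (T : H₁ →L[ℂ] H₂) (hT : Summable fun j => ‖T (e j)‖ ^ 2) :
    T = ∑' p : I × K,
        (∑' j, ⟪(rankOne (f p.1) (g p.2)) (e j), T (e j)⟫_ℂ) •
          rankOne (Sfinv (f p.1)) (Sginv (g p.2)) := by
  classical
  -- basic summabilities and finite bounds
  have hgs : ∀ x : H₁, Summable fun k => ‖⟪g k, x⟫_ℂ‖ ^ 2 :=
    frame_summable g A hA (fun x => (hg x).1)
  have hfs : ∀ y : H₂, Summable fun i => ‖⟪f i, y⟫_ℂ‖ ^ 2 :=
    frame_summable f A' hA' (fun y => (hf y).1)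
  have hgb : ∀ (s : Finset K) (x : H₁), ∑ k ∈ s, ‖⟪g k, x⟫_ℂ‖ ^ 2 ≤ B * ‖x‖ ^ 2 :=
    frame_finset_bound g A B hA hg
  have hfb : ∀ (s : Finset I) (y : H₂), ∑ i ∈ s, ‖⟪f i, y⟫_ℂ‖ ^ 2 ≤ B' * ‖y‖ ^ 2 :=
    frame_finset_bound f A' B' hA' hf
  -- synthesis operators as convergent sums
  have hgsyn : ∀ x : H₁, HasSum (fun k => ⟪g k, x⟫_ℂ • g k) (Sg x) := by
    intro x
    have hsum : Summable fun k => ⟪g k, x⟫_ℂ • g k :=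
      summable_of_sq_bound _ (fun k => ‖⟪g k, x⟫_ℂ‖ ^ 2) (fun k => by positivity) (hgs x)
        B hB.le (fun t => synth_finset_bound g B hB.le hgb _ t)
    rw [hSg x]
    exact hsum.hasSum
  have hfsyn : ∀ y : H₂, HasSum (fun i => ⟪f i, y⟫_ℂ • f i) (Sf y) := by
    intro y
    have hsum : Summable fun i => ⟪f i, y⟫_ℂ • f i :=
      summable_of_sq_bound _ (fun i => ‖⟪f i, y⟫_ℂ‖ ^ 2) (fun i => by positivity) (hfs y)
        B' hB'.le (fun t => synth_finset_bound f B' hB'.le hfb _ t)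
    rw [hSf y]
    exact hsum.hasSum
  -- Sg is self-adjoint, hence so is Sginv
  have hSgsa : ∀ x z : H₁, ⟪Sg x, z⟫_ℂ = ⟪x, Sg z⟫_ℂ := by
    intro x z
    have h1 : HasSum (fun k => ⟪g k, x⟫_ℂ * ⟪z, g k⟫_ℂ) ⟪z, Sg x⟫_ℂ := by
      have h := (hgsyn x).mapL (innerSL ℂ z)
      simpa only [innerSL_apply_apply, inner_smul_right, smul_eq_mul] using h
    have h2 : HasSum (fun k => ⟪g k, z⟫_ℂ * ⟪x, g k⟫_ℂ) ⟪x, Sg z⟫_ℂ := by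
      have h := (hgsyn z).mapL (innerSL ℂ x)
      simpa only [innerSL_apply_apply, inner_smul_right, smul_eq_mul] using h
    have h1s := h1.star
    rw [show star ⟪z, Sg x⟫_ℂ = ⟪Sg x, z⟫_ℂ from inner_conj_symm _ _] at h1s
    have e4 : ∀ k, star (⟪g k, x⟫_ℂ * ⟪z, g k⟫_ℂ) = ⟪g k, z⟫_ℂ * ⟪x, g k⟫_ℂ := by
      intro k
      rw [star_mul']
      rw [show star ⟪g k, x⟫_ℂ = ⟪x, g k⟫_ℂ from inner_conj_symm _ _,
        show star ⟪z, g k⟫_ℂ = ⟪g k, z⟫_ℂ from inner_conj_symm _ _]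
      ring
    rw [funext e4] at h1s
    exact h1s.unique h2
  have hSgadj : Sg = ContinuousLinearMap.adjoint Sg :=
    (ContinuousLinearMap.eq_adjoint_iff Sg Sg).mpr hSgsa
  have h0 : (ContinuousLinearMap.adjoint Sginv).comp Sg = ContinuousLinearMap.id ℂ H₁ := by
    have h0' := congrArg ContinuousLinearMap.adjoint hSg1
    rwa [ContinuousLinearMap.adjoint_comp, ContinuousLinearMap.adjoint_id, ← hSgadj] at h0'
  have hSginvadj : ContinuousLinearMap.adjoint Sginv = Sginv := by
    calc ContinuousLinearMap.adjoint Sginv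
        = (ContinuousLinearMap.adjoint Sginv).comp (Sg.comp Sginv) := by
          rw [hSg1, ContinuousLinearMap.comp_id]
      _ = ((ContinuousLinearMap.adjoint Sginv).comp Sg).comp Sginv := by
          rw [ContinuousLinearMap.comp_assoc]
      _ = Sginv := by rw [h0, ContinuousLinearMap.id_comp]
  have hSginv_inner : ∀ u x : H₁, ⟪Sginv u, x⟫_ℂ = ⟪u, Sginv x⟫_ℂ := by
    intro u x
    conv_lhs => rw [← hSginvadj]
    exact ContinuousLinearMap.adjoint_inner_left Sginv x u
  -- same for Sf
  have hSfsa : ∀ x z : H₂, ⟪Sf x, z⟫_ℂ = ⟪x, Sf z⟫_ℂ := by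
    intro x z
    have h1 : HasSum (fun i => ⟪f i, x⟫_ℂ * ⟪z, f i⟫_ℂ) ⟪z, Sf x⟫_ℂ := by
      have h := (hfsyn x).mapL (innerSL ℂ z)
      simpa only [innerSL_apply_apply, inner_smul_right, smul_eq_mul] using h
    have h2 : HasSum (fun i => ⟪f i, z⟫_ℂ * ⟪x, f i⟫_ℂ) ⟪x, Sf z⟫_ℂ := by
      have h := (hfsyn z).mapL (innerSL ℂ x)
      simpa only [innerSL_apply_apply, inner_smul_right, smul_eq_mul] using h
    have h1s := h1.star
    rw [show star ⟪z, Sf x⟫_ℂ = ⟪Sf x, z⟫_ℂ from inner_conj_symm _ _] at h1s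
    have e4 : ∀ i, star (⟪f i, x⟫_ℂ * ⟪z, f i⟫_ℂ) = ⟪f i, z⟫_ℂ * ⟪x, f i⟫_ℂ := by
      intro i
      rw [star_mul']
      rw [show star ⟪f i, x⟫_ℂ = ⟪x, f i⟫_ℂ from inner_conj_symm _ _,
        show star ⟪z, f i⟫_ℂ = ⟪f i, z⟫_ℂ from inner_conj_symm _ _]
      ring
    rw [funext e4] at h1s
    exact h1s.unique h2
  have hSfadj : Sf = ContinuousLinearMap.adjoint Sf :=
    (ContinuousLinearMap.eq_adjoint_iff Sf Sf).mpr hSfsa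
  have h0f : (ContinuousLinearMap.adjoint Sfinv).comp Sf = ContinuousLinearMap.id ℂ H₂ := by
    have h0' := congrArg ContinuousLinearMap.adjoint hSf1
    rwa [ContinuousLinearMap.adjoint_comp, ContinuousLinearMap.adjoint_id, ← hSfadj] at h0'
  have hSfinvadj : ContinuousLinearMap.adjoint Sfinv = Sfinv := by
    calc ContinuousLinearMap.adjoint Sfinv
        = (ContinuousLinearMap.adjoint Sfinv).comp (Sf.comp Sfinv) := by
          rw [hSf1, ContinuousLinearMap.comp_id]
      _ = ((ContinuousLinearMap.adjoint Sfinv).comp Sf).comp Sfinv := by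
          rw [ContinuousLinearMap.comp_assoc]
      _ = Sfinv := by rw [h0f, ContinuousLinearMap.id_comp]
  have hSfinv_inner : ∀ u y : H₂, ⟪Sfinv u, y⟫_ℂ = ⟪u, Sfinv y⟫_ℂ := by
    intro u y
    conv_lhs => rw [← hSfinvadj]
    exact ContinuousLinearMap.adjoint_inner_left Sfinv y u
  -- dual frame finite bounds
  have hgb' : ∀ (s : Finset K) (x : H₁),
      ∑ k ∈ s, ‖⟪Sginv (g k), x⟫_ℂ‖ ^ 2 ≤ (B * ‖Sginv‖ ^ 2) * ‖x‖ ^ 2 := by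
    intro s x
    calc ∑ k ∈ s, ‖⟪Sginv (g k), x⟫_ℂ‖ ^ 2
        = ∑ k ∈ s, ‖⟪g k, Sginv x⟫_ℂ‖ ^ 2 :=
          Finset.sum_congr rfl fun k _ => by rw [hSginv_inner]
      _ ≤ B * ‖Sginv x‖ ^ 2 := hgb s _
      _ ≤ B * (‖Sginv‖ * ‖x‖) ^ 2 := by
          have := Sginv.le_opNorm x
          have h2 : ‖Sginv x‖ ^ 2 ≤ (‖Sginv‖ * ‖x‖) ^ 2 := by
            apply pow_le_pow_left₀ (norm_nonneg _) this
          nlinarith [hB.le]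
      _ = (B * ‖Sginv‖ ^ 2) * ‖x‖ ^ 2 := by ring
  have hfb' : ∀ (s : Finset I) (y : H₂),
      ∑ i ∈ s, ‖⟪Sfinv (f i), y⟫_ℂ‖ ^ 2 ≤ (B' * ‖Sfinv‖ ^ 2) * ‖y‖ ^ 2 := by
    intro s y
    calc ∑ i ∈ s, ‖⟪Sfinv (f i), y⟫_ℂ‖ ^ 2
        = ∑ i ∈ s, ‖⟪f i, Sfinv y⟫_ℂ‖ ^ 2 :=
          Finset.sum_congr rfl fun i _ => by rw [hSfinv_inner]
      _ ≤ B' * ‖Sfinv y‖ ^ 2 := hfb s _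
      _ ≤ B' * (‖Sfinv‖ * ‖y‖) ^ 2 := by
          have := Sfinv.le_opNorm y
          have h2 : ‖Sfinv y‖ ^ 2 ≤ (‖Sfinv‖ * ‖y‖) ^ 2 := by
            apply pow_le_pow_left₀ (norm_nonneg _) this
          nlinarith [hB'.le]
      _ = (B' * ‖Sfinv‖ ^ 2) * ‖y‖ ^ 2 := by ring
  -- the HS coefficients
  have hc_eq : ∀ p : I × K,
      (∑' j, ⟪(rankOne (f p.1) (g p.2)) (e j), T (e j)⟫_ℂ) = ⟪f p.1, T (g p.2)⟫_ℂ := by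
    intro p
    have hrepr : HasSum (fun j => ⟪e j, g p.2⟫_ℂ • e j) (g p.2) := by
      have h := e.hasSum_repr (g p.2)
      simpa only [HilbertBasis.repr_apply_apply] using h
    have h2 := hrepr.mapL ((innerSL ℂ (f p.1)).comp T)
    have e4 : ∀ j, ((innerSL ℂ (f p.1)).comp T) (⟪e j, g p.2⟫_ℂ • e j) =
        ⟪(rankOne (f p.1) (g p.2)) (e j), T (e j)⟫_ℂ := by
      intro j
      simp only [ContinuousLinearMap.comp_apply, map_smul, innerSL_apply_apply, inner_smul_right,
        rankOne, ContinuousLinearMap.smulRight_apply, inner_smul_left, smul_eq_mul]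
      rw [show (starRingEnd ℂ) ⟪g p.2, e j⟫_ℂ = ⟪e j, g p.2⟫_ℂ from inner_conj_symm _ _]
    rw [funext e4] at h2
    rw [h2.tsum_eq]
    simp only [ContinuousLinearMap.comp_apply, innerSL_apply_apply]
  -- summability of the square norms of the coefficients
  obtain ⟨w, u, hu⟩ := exists_hilbertBasis ℂ H₂
  set T' := ContinuousLinearMap.adjoint T with hT'def
  have hadj_sum : Summable (fun m : w => ‖T' (u m)‖ ^ 2) := by
    have hprod : Summable (fun q : ι × w => ‖⟪u q.2, T (e q.1)⟫_ℂ‖ ^ 2) := by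
      rw [summable_prod_of_nonneg (fun q => by positivity)]
      constructor
      · intro j; exact (hilbertBasis_parseval u (T (e j))).summable
      · exact hT.congr fun j => ((hilbertBasis_parseval u (T (e j))).tsum_eq).symm
    have hswap : Summable (fun q : w × ι => ‖⟪u q.1, T (e q.2)⟫_ℂ‖ ^ 2) :=
      (Equiv.prodComm ι w).summable_iff.mp hprod
    have hm := ((summable_prod_of_nonneg (fun q => by positivity)).mp hswap).2
    refine hm.congr fun m => ?_
    have hterm : ∀ j, ‖⟪u m, T (e j)⟫_ℂ‖ ^ 2 = ‖⟪e j, T' (u m)⟫_ℂ‖ ^ 2 := by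
      intro j
      rw [hT'def, ← ContinuousLinearMap.adjoint_inner_left T (e j) (u m),
        norm_inner_symm]
    calc (∑' j, ‖⟪u m, T (e j)⟫_ℂ‖ ^ 2) = ∑' j, ‖⟪e j, T' (u m)⟫_ℂ‖ ^ 2 := tsum_congr hterm
      _ = ‖T' (u m)‖ ^ 2 := (hilbertBasis_parseval e (T' (u m))).tsum_eq
  have hTg_sum : Summable (fun k => ‖T (g k)‖ ^ 2) := by
    have hprod : Summable (fun q : w × K => ‖⟪g q.2, T' (u q.1)⟫_ℂ‖ ^ 2) := by
      rw [summable_prod_of_nonneg (fun q => by positivity)]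
      refine ⟨fun m => hgs (T' (u m)), ?_⟩
      exact Summable.of_nonneg_of_le (fun m => tsum_nonneg fun k => by positivity)
        (fun m => (hg (T' (u m))).2) (hadj_sum.mul_left B)
    have hswap : Summable (fun q : K × w => ‖⟪g q.1, T' (u q.2)⟫_ℂ‖ ^ 2) :=
      (Equiv.prodComm w K).summable_iff.mp hprod
    have hk := ((summable_prod_of_nonneg (fun q => by positivity)).mp hswap).2
    refine hk.congr fun k => ?_
    have hterm : ∀ m : w, ‖⟪g k, T' (u m)⟫_ℂ‖ ^ 2 = ‖⟪u m, T (g k)⟫_ℂ‖ ^ 2 := by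
      intro m
      rw [hT'def, norm_inner_symm, ContinuousLinearMap.adjoint_inner_left T (g k) (u m)]
    calc (∑' m : w, ‖⟪g k, T' (u m)⟫_ℂ‖ ^ 2) = ∑' m : w, ‖⟪u m, T (g k)⟫_ℂ‖ ^ 2 :=
        tsum_congr hterm
      _ = ‖T (g k)‖ ^ 2 := (hilbertBasis_parseval u (T (g k))).tsum_eq
  have hcs : Summable (fun p : I × K => ‖⟪f p.1, T (g p.2)⟫_ℂ‖ ^ 2) := by
    have hprod : Summable (fun q : K × I => ‖⟪f q.2, T (g q.1)⟫_ℂ‖ ^ 2) := by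
      rw [summable_prod_of_nonneg (fun q => by positivity)]
      refine ⟨fun k => hfs (T (g k)), ?_⟩
      exact Summable.of_nonneg_of_le (fun k => tsum_nonneg fun i => by positivity)
        (fun k => (hf (T (g k))).2) (hTg_sum.mul_left B')
    exact (Equiv.prodComm K I).summable_iff.mp hprod
  -- summability of the operator-valued family
  have hRsum : Summable (fun p : I × K =>
      ⟪f p.1, T (g p.2)⟫_ℂ • rankOne (Sfinv (f p.1)) (Sginv (g p.2))) := by
    refine summable_of_sq_bound _ (fun p => ‖⟪f p.1, T (g p.2)⟫_ℂ‖ ^ 2)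
      (fun p => by positivity) hcs ((B * ‖Sginv‖ ^ 2) * (B' * ‖Sfinv‖ ^ 2))
      (by positivity) ?_
    intro t
    refine ContinuousLinearMap.opNorm_le_bound _ (Real.sqrt_nonneg _) fun x => ?_
    rw [ContinuousLinearMap.sum_apply]
    have hterm : ∀ p : I × K,
        (⟪f p.1, T (g p.2)⟫_ℂ • rankOne (Sfinv (f p.1)) (Sginv (g p.2))) x =
        (⟪f p.1, T (g p.2)⟫_ℂ * ⟪Sginv (g p.2), x⟫_ℂ) • Sfinv (f p.1) := by
      intro p
      simp only [ContinuousLinearMap.smul_apply, rankOne,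
        ContinuousLinearMap.smulRight_apply, innerSL_apply_apply, smul_smul]
    rw [Finset.sum_congr rfl fun p _ => hterm p]
    exact rankOne_finset_bound (fun k => Sginv (g k)) (fun i => Sfinv (f i))
      (B * ‖Sginv‖ ^ 2) (B' * ‖Sfinv‖ ^ 2) (by positivity) (by positivity)
      hgb' hfb' _ t x
  -- rewrite the coefficients in the goal
  have hrw : (fun p : I × K =>
      (∑' j, ⟪(rankOne (f p.1) (g p.2)) (e j), T (e j)⟫_ℂ) •
        rankOne (Sfinv (f p.1)) (Sginv (g p.2))) =
      (fun p : I × K =>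
        ⟪f p.1, T (g p.2)⟫_ℂ • rankOne (Sfinv (f p.1)) (Sginv (g p.2))) :=
    funext fun p => by rw [hc_eq p]
  rw [hrw]
  -- now identify the sum pointwise
  refine ContinuousLinearMap.ext fun x => ?_
  have hEval := hRsum.hasSum.mapL (ContinuousLinearMap.apply ℂ H₂ x)
  have hinner : ∀ i : I,
      HasSum (fun k => (⟪f i, T (g k)⟫_ℂ • rankOne (Sfinv (f i)) (Sginv (g k))) x)
        (⟪f i, T x⟫_ℂ • Sfinv (f i)) := by
    intro i
    have hy : HasSum (fun k => ⟪g k, Sginv x⟫_ℂ • g k) x := by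
      have h := hgsyn (Sginv x)
      rwa [show Sg (Sginv x) = x from ContinuousLinearMap.ext_iff.mp hSg1 x] at h
    have h2 := hy.mapL ((innerSL ℂ (f i)).comp T)
    have h3 := h2.smul_const (Sfinv (f i))
    have e5 : ∀ k, ((innerSL ℂ (f i)).comp T) (⟪g k, Sginv x⟫_ℂ • g k) • Sfinv (f i) =
        (⟪f i, T (g k)⟫_ℂ • rankOne (Sfinv (f i)) (Sginv (g k))) x := by
      intro k
      simp only [ContinuousLinearMap.comp_apply, map_smul, innerSL_apply_apply, inner_smul_right,
        ContinuousLinearMap.smul_apply, rankOne, ContinuousLinearMap.smulRight_apply,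
        smul_smul, smul_eq_mul]
      rw [hSginv_inner]
      ring_nf
    rw [funext e5] at h3
    have hval : ((innerSL ℂ (f i)).comp T) x = ⟪f i, T x⟫_ℂ := rfl
    rwa [hval] at h3
  have houter : HasSum (fun i => ⟪f i, T x⟫_ℂ • Sfinv (f i)) (T x) := by
    have h1 := (hfsyn (T x)).mapL Sfinv
    rw [show Sfinv (Sf (T x)) = T x from ContinuousLinearMap.ext_iff.mp hSf2 (T x)] at h1
    have e6 : ∀ i, Sfinv (⟪f i, T x⟫_ℂ • f i) = ⟪f i, T x⟫_ℂ • Sfinv (f i) := fun i =>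
      map_smul Sfinv _ _
    rwa [funext e6] at h1
  calc T x = ∑' i, ⟪f i, T x⟫_ℂ • Sfinv (f i) := houter.tsum_eq.symm
    _ = ∑' i, ∑' k, (⟪f i, T (g k)⟫_ℂ • rankOne (Sfinv (f i)) (Sginv (g k))) x :=
        tsum_congr fun i => ((hinner i).tsum_eq).symm
    _ = ∑' p : I × K, (⟪f p.1, T (g p.2)⟫_ℂ • rankOne (Sfinv (f p.1)) (Sginv (g p.2))) x :=
        (Summable.tsum_prod' hEval.summable (fun i => (hinner i).summable)).symm
    _ = (∑' p : I × K, ⟪f p.1, T (g p.2)⟫_ℂ • rankOne (Sfinv (f p.1)) (Sginv (g p.2))) x :=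
        hEval.tsum_eq
end

section
/- Let (g_k) be a frame sequence in a Hilbert space H and V = closure of span(g_k). Then the orthogonal projection of any f ∈ H onto V is given by P(f) = D G† C f, where C is the analysis operator, D = C* the synthesis operator, and G† the pseudoinverse of the Gram matrix G of (g_k). -/
open scoped InnerProductSpace InnerProduct NNReal
open ContinuousLinearMap Submodule

/-!
Since `C x = (⟪g k, x⟫)ₖ`, the kernel of `C` is `Vᗮ`, so `V = (ker C)ᗮ`. The lower frame bound
makes `C†C` coercive on `V`, hence surjective onto `V`, so `D = C†` has range exactly `V`.
Writing `P f = D c`, we get `C f = C (P f) = G c`; and since `ker G = ker D`, the identity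
`G G† G = G` gives `D G† G = D`, whence `D G† C f = D G† G c = D c = P f`.
-/

theorem lp.norm_sq_eq_tsum {ι : Type*} {E : ι → Type*} [∀ i, NormedAddCommGroup (E i)]
    (f : lp E 2) : ‖f‖ ^ 2 = ∑' i, ‖f i‖ ^ 2 := by
  simpa using lp.norm_rpow_eq_tsum (p := 2) (by norm_num) f

section

variable {𝕜 E : Type*} [RCLike 𝕜] [NormedAddCommGroup E] [InnerProductSpace 𝕜 E]

theorem ker_eq_orthogonal_span_range_of_apply_eq_inner {K : Type*} (g : K → E)
    (C : E →L[𝕜] lp (fun _ : K ↦ 𝕜) 2) (hC : ∀ x k, (C x : K → 𝕜) k = ⟪g k, x⟫_𝕜) :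
    C.ker = (span 𝕜 (Set.range g))ᗮ := by
  ext x
  have hspan : x ∈ (span 𝕜 (Set.range g))ᗮ ↔ ∀ k, ⟪g k, x⟫_𝕜 = 0 := by
    rw [mem_orthogonal']
    change span 𝕜 _ ≤ LinearMap.ker (innerₛₗ 𝕜 x) ↔ _
    rw [span_le, Set.range_subset_iff]
    simp [inner_eq_zero_symm]
  rw [hspan, LinearMap.mem_ker, coe_coe, lp.ext_iff, funext_iff]
  simp [hC]

variable [CompleteSpace E] {F : Type*} [NormedAddCommGroup F] [InnerProductSpace 𝕜 F]
  [CompleteSpace F]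

namespace ContinuousLinearMap

theorem range_adjoint_eq_orthogonal_ker_of_bound (C : E →L[𝕜] F) {A : ℝ≥0} (hA : 0 < A)
    (hC : ∀ x ∈ C.kerᗮ, A * ‖x‖ ^ 2 ≤ ‖C x‖ ^ 2) : C†.range = C.kerᗮ := by
  have hle : C†.range ≤ C.kerᗮ := C.orthogonal_ker ▸ le_topologicalClosure _
  let T : C.kerᗮ →L[𝕜] C.kerᗮ := (C† ∘L C).restrict fun x _ ↦ hle ⟨C x, rfl⟩
  have hT : ∀ x, ‖x‖ ^ 2 * A ≤ ‖⟪T x, x⟫_𝕜‖ := fun x ↦ by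
    have : ⟪T x, x⟫_𝕜 = ((‖C x‖ ^ 2 : ℝ) : 𝕜) := by
      rw [coe_inner, coe_restrict_apply, comp_apply, adjoint_inner_left,
        inner_self_eq_norm_sq_to_K]
      norm_cast
    rw [this, RCLike.norm_ofReal, abs_of_nonneg (by positivity), mul_comm]
    exact hC x x.2
  refine le_antisymm hle fun w hw ↦ ?_
  obtain ⟨x, hx⟩ :=
    (isUnit_iff_bijective.mp (isUnit_of_forall_le_norm_inner_map T hA hT)).2 ⟨w, hw⟩
  exact ⟨C x, congrArg Subtype.val hx⟩

theorem adjoint_comp_comp_self_comp_adjoint (C : E →L[𝕜] F) {M : F →L[𝕜] F}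
    (hM : (C ∘L C†) ∘L M ∘L (C ∘L C†) = C ∘L C†) : C† ∘L M ∘L (C ∘L C†) = C† := by
  ext z
  have : z - M (C ((C†) z)) ∈ (C ∘L C†).ker := by
    simpa [sub_eq_zero] using congr($hM z).symm
  rw [ker_self_comp_adjoint, LinearMap.mem_ker, coe_coe, map_sub, sub_eq_zero] at this
  exact this.symm

theorem adjoint_apply_apply_eq_starProjection_orthogonal_ker (C : E →L[𝕜] F) {M : F →L[𝕜] F}
    (hM : (C ∘L C†) ∘L M ∘L (C ∘L C†) = C ∘L C†) (hrange : C†.range = C.kerᗮ) (f : E) :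
    (C†) (M (C f)) = C.kerᗮ.starProjection f := by
  obtain ⟨c, hc⟩ := hrange.ge (starProjection_apply_mem _ f)
  have hCf : C f = C ((C†) c) := by
    have : f - C.kerᗮ.starProjection f ∈ C†.rangeᗮ := by
      rw [hrange]; exact sub_starProjection_mem_orthogonal f
    rwa [orthogonal_range, adjoint_adjoint, LinearMap.mem_ker, coe_coe, map_sub, sub_eq_zero,
      ← hc] at this
  rw [hCf, ← hc]
  exact congr($(C.adjoint_comp_comp_self_comp_adjoint hM) c)

end ContinuousLinearMap

end

theorem frame_sequence_projection_general
    {H K : Type*} [NormedAddCommGroup H] [InnerProductSpace ℂ H] [CompleteSpace H]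
    (g : K → H) (A B : ℝ) (hA : 0 < A)
    (hframeseq : ∀ x ∈ (Submodule.span ℂ (Set.range g)).topologicalClosure,
      A * ‖x‖ ^ 2 ≤ ∑' k, ‖⟪g k, x⟫_ℂ‖ ^ 2 ∧ ∑' k, ‖⟪g k, x⟫_ℂ‖ ^ 2 ≤ B * ‖x‖ ^ 2)
    (C : H →L[ℂ] lp (fun _ : K => ℂ) 2)
    (hC : ∀ (x : H) (k : K), (C x : ∀ _ : K, ℂ) k = ⟪g k, x⟫_ℂ)
    (D : lp (fun _ : K => ℂ) 2 →L[ℂ] H) (hD : D = ContinuousLinearMap.adjoint C)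
    (G : lp (fun _ : K => ℂ) 2 →L[ℂ] lp (fun _ : K => ℂ) 2) (hG : G = C.comp D)
    -- `Gdag` is the Moore–Penrose pseudoinverse of `G`
    (Gdag : lp (fun _ : K => ℂ) 2 →L[ℂ] lp (fun _ : K => ℂ) 2)
    (hg1 : G.comp (Gdag.comp G) = G) :
    ∀ f : H,
      (Submodule.orthogonalProjection (Submodule.span ℂ (Set.range g)).topologicalClosure f : H) =
        D (Gdag (C f)) := by
  intro f
  subst hD hG
  have hV : (span ℂ (Set.range g)).topologicalClosure = C.kerᗮ := by
    rw [ker_eq_orthogonal_span_range_of_apply_eq_inner g C hC, orthogonal_orthogonal_eq_closure]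
  have hrange : C†.range = C.kerᗮ := by
    refine C.range_adjoint_eq_orthogonal_ker_of_bound (A := A.toNNReal) (by simpa) fun x hx ↦ ?_
    rw [Real.coe_toNNReal _ hA.le, lp.norm_sq_eq_tsum]
    simpa [hC] using (hframeseq x (hV ▸ hx)).1
  rw [C.adjoint_apply_apply_eq_starProjection_orthogonal_ker hg1 hrange,
    coe_orthogonalProjectionOnto_apply]
  simp only [hV]

/-- For a frame sequence `(g k)` (a frame for `V`, the closure of its span) with
analysis operator `C`, synthesis operator `D = C*` and Gram matrix `G = C D` with Moore–Penrose
pseudoinverse `G†`, the orthogonal projection onto `V` is `P f = D G† C f`. -/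
theorem frame_sequence_projection
    {H K : Type*} [NormedAddCommGroup H] [InnerProductSpace ℂ H] [CompleteSpace H]
    (g : K → H) (A B : ℝ) (hA : 0 < A) (hB : 0 < B)
    (hframeseq : ∀ x ∈ (Submodule.span ℂ (Set.range g)).topologicalClosure,
      A * ‖x‖ ^ 2 ≤ ∑' k, ‖⟪g k, x⟫_ℂ‖ ^ 2 ∧ ∑' k, ‖⟪g k, x⟫_ℂ‖ ^ 2 ≤ B * ‖x‖ ^ 2)
    (C : H →L[ℂ] lp (fun _ : K => ℂ) 2)
    (hC : ∀ (x : H) (k : K), (C x : ∀ _ : K, ℂ) k = ⟪g k, x⟫_ℂ)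
    (D : lp (fun _ : K => ℂ) 2 →L[ℂ] H) (hD : D = ContinuousLinearMap.adjoint C)
    (G : lp (fun _ : K => ℂ) 2 →L[ℂ] lp (fun _ : K => ℂ) 2) (hG : G = C.comp D)
    -- `Gdag` is the Moore–Penrose pseudoinverse of `G`
    (Gdag : lp (fun _ : K => ℂ) 2 →L[ℂ] lp (fun _ : K => ℂ) 2)
    (hg1 : G.comp (Gdag.comp G) = G) (hg2 : Gdag.comp (G.comp Gdag) = Gdag)
    (hg3 : ContinuousLinearMap.adjoint (G.comp Gdag) = G.comp Gdag)
    (hg4 : ContinuousLinearMap.adjoint (Gdag.comp G) = Gdag.comp G) :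
    ∀ f : H,
      (Submodule.orthogonalProjection (Submodule.span ℂ (Set.range g)).topologicalClosure f : H) =
        D (Gdag (C f)) :=
  frame_sequence_projection_general g A B hA hframeseq C hC D hD G hG Gdag hg1
end

section
/- Let V = {Σ_k m_k (f_k ⊗ ḡ_k) : m ∈ ℂᴷ} be the span of rank-one operators built from finite families (g_k) in ℂⁿ and (f_k) in ℂᵐ. The best Frobenius-norm approximation of an m × n matrix T by a frame multiplier M_{m,f,g} = Σ_k m_k f_k ⊗ ḡ_k is P_V(T) = Σ_k σ_k (f_k ⊗ ḡ_k), where σ = G† · σ_L, G is the Gram matrix G_{l,k} = ⟨f_k⊗ḡ_k, f_l⊗ḡ_l⟩_HS = ⟨g_l, g_k⟩⟨f_k, f_l⟩ and σ_L(T)_k = ⟨T g_k, f_k⟩; i.e., ‖T − P_V(T)‖_HS ≤ ‖T − M‖_HS for every operator M in V. -/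
open scoped ComplexConjugate BigOperators InnerProductSpace
open Matrix

/-!
Embed matrices isometrically into an inner product space, so that the Frobenius inner product
becomes `⟪A, B⟫ = tr (Aᴴ B)` and the question is one of best approximation from the span `V` of
vectors `v k`. The lower symbol `s l = ⟪v l, x⟫` agrees with that of the orthogonal projection
`P x = ∑ c k • v k`, so `s = G c` lies in the range of the Gram matrix `G`. Hence any `A` with
`G A G = G` gives `G (A s) = s`: the residual `x - ∑ (A s) k • v k` is orthogonal to every `v k`,
so `∑ (A s) k • v k = P x`, the closest point of `V` to `x`.
-/

namespace Matrix

section Gram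

variable {𝕜 E ι : Type*} [RCLike 𝕜] [NormedAddCommGroup E] [InnerProductSpace 𝕜 E] [Fintype ι]

lemma gram_mulVec_apply (v : ι → E) (c : ι → 𝕜) (l : ι) :
    (gram 𝕜 v *ᵥ c) l = ⟪v l, ∑ k, c k • v k⟫_𝕜 := by
  simp [mulVec, dotProduct, gram_apply, inner_sum, inner_smul_right, mul_comm]

instance (v : ι → E) : (Submodule.span 𝕜 (Set.range v)).HasOrthogonalProjection :=
  haveI := FiniteDimensional.span_of_finite 𝕜 (Set.finite_range v)
  inferInstance

lemma exists_gram_mulVec_eq_inner (v : ι → E) (x : E) :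
    ∃ c, gram 𝕜 v *ᵥ c = fun l => ⟪v l, x⟫_𝕜 := by
  set V := Submodule.span 𝕜 (Set.range v)
  obtain ⟨c, hc⟩ := Submodule.mem_span_range_iff_exists_fun 𝕜 |>.mp
    (V.starProjection_apply_mem x)
  refine ⟨c, funext fun l => ?_⟩
  have hvl : V.starProjection (v l) = v l :=
    Submodule.starProjection_eq_self_iff.mpr (Submodule.subset_span ⟨l, rfl⟩)
  rw [gram_mulVec_apply, hc, ← V.inner_starProjection_left_eq_right, hvl]

theorem sum_mulVec_smul_eq_starProjection (v : ι → E) (x : E) (A : Matrix ι ι 𝕜)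
    (hA : gram 𝕜 v * A * gram 𝕜 v = gram 𝕜 v) :
    ∑ k, (A *ᵥ fun l => ⟪v l, x⟫_𝕜) k • v k =
      (Submodule.span 𝕜 (Set.range v)).starProjection x := by
  obtain ⟨c, hc⟩ := exists_gram_mulVec_eq_inner (𝕜 := 𝕜) v x
  symm
  refine Submodule.eq_starProjection_of_mem_of_inner_eq_zero
    (Submodule.mem_span_range_iff_exists_fun 𝕜 |>.mpr ⟨_, rfl⟩) fun w hw => ?_
  induction hw using Submodule.span_induction with
  | mem _ hw =>
    obtain ⟨l, rfl⟩ := hw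
    rw [inner_eq_zero_symm, inner_sub_right, ← gram_mulVec_apply, ← hc, mulVec_mulVec,
      mulVec_mulVec, hA, hc, sub_self]
  | zero => exact inner_zero_right _
  | add _ _ _ _ h h' => rw [inner_add_right, h, h', add_zero]
  | smul a _ _ h => rw [inner_smul_right, h, mul_zero]

theorem norm_sub_sum_mulVec_smul_le (v : ι → E) (x : E) (A : Matrix ι ι 𝕜)
    (hA : gram 𝕜 v * A * gram 𝕜 v = gram 𝕜 v) (c : ι → 𝕜) :
    ‖x - ∑ k, (A *ᵥ fun l => ⟪v l, x⟫_𝕜) k • v k‖ ≤ ‖x - ∑ k, c k • v k‖ := by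
  rw [sum_mulVec_smul_eq_starProjection v x A hA, Submodule.starProjection_minimal]
  have hmem : ∑ k, c k • v k ∈ Submodule.span 𝕜 (Set.range v) :=
    Submodule.mem_span_range_iff_exists_fun 𝕜 |>.mpr ⟨c, rfl⟩
  exact ciInf_le ⟨0, Set.forall_mem_range.mpr fun _ => norm_nonneg _⟩
    (⟨_, hmem⟩ : Submodule.span 𝕜 (Set.range v))

end Gram

section Frobenius

variable {𝕜 m n : Type*} [RCLike 𝕜] [Fintype m] [Fintype n]

@[simps]
def toFrobeniusLp : Matrix m n 𝕜 →ₗ[𝕜] PiLp 2 (fun _ : m => EuclideanSpace 𝕜 n) where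
  toFun A := WithLp.toLp 2 fun i => WithLp.toLp 2 (A i)
  map_add' _ _ := rfl
  map_smul' _ _ := rfl

lemma inner_toFrobeniusLp (A B : Matrix m n 𝕜) :
    ⟪toFrobeniusLp A, toFrobeniusLp B⟫_𝕜 = trace (Aᴴ * B) := by
  simp only [PiLp.inner_apply, toFrobeniusLp_apply_ofLp_ofLp, RCLike.inner_apply, trace,
    diag_apply, mul_apply, conjTranspose_apply, RCLike.star_def, mul_comm]
  exact Finset.sum_comm

lemma norm_toFrobeniusLp_sq (A : Matrix m n 𝕜) :
    ‖toFrobeniusLp A‖ ^ 2 = ∑ i, ∑ j, ‖A i j‖ ^ 2 := by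
  simp [PiLp.norm_sq_eq_of_L2]

end Frobenius

end Matrix

theorem best_multiplier_approximation_general (m n K : ℕ)
    (T : Matrix (Fin m) (Fin n) ℂ)
    (R : Fin K → Matrix (Fin m) (Fin n) ℂ)
    (G : Matrix (Fin K) (Fin K) ℂ)
    (hGram : ∀ l k, G l k = Matrix.trace ((R l)ᴴ * R k))
    -- `Gdag` is the Moore–Penrose pseudoinverse of `G`
    (Gdag : Matrix (Fin K) (Fin K) ℂ)
    (h1 : G * Gdag * G = G)
    (σL : Fin K → ℂ) (hσL : ∀ k, σL k = Matrix.trace ((R k)ᴴ * T))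
    (σ : Fin K → ℂ) (hσ : σ = Gdag.mulVec σL) :
    ∀ mcoef : Fin K → ℂ,
      ∑ i, ∑ j, ‖(T - ∑ k, σ k • R k) i j‖ ^ 2 ≤
        ∑ i, ∑ j, ‖(T - ∑ k, mcoef k • R k) i j‖ ^ 2 := by
  intro mcoef
  set v := fun k => toFrobeniusLp (R k)
  have hG : G = gram ℂ v := by
    ext l k
    rw [hGram, gram_apply, inner_toFrobeniusLp]
  have hσL' : σL = fun l => ⟪v l, toFrobeniusLp T⟫_ℂ := by
    funext l
    rw [hσL, inner_toFrobeniusLp]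
  simp only [← norm_toFrobeniusLp_sq, map_sub, map_sum, map_smul]
  rw [hσ, hσL']
  gcongr
  exact norm_sub_sum_mulVec_smul_le v _ Gdag (hG ▸ h1) mcoef

/-- best Frobenius-norm approximation of a matrix `T` by frame multipliers.
With rank-one matrices `R k = f k ⊗ (g k)‾`, Gram matrix `G_{l,k} = ⟨R k, R l⟩_HS`,
lower symbol `σ_L(T)_k = ⟨T, R k⟩_HS = ⟨T g_k, f_k⟩`, and upper symbol `σ = G† σ_L`
(`G†` the Moore–Penrose pseudoinverse of `G`), the operator `P_V(T) = Σ_k σ_k R_k`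
is the best approximation of `T` in Frobenius norm among all multipliers `Σ_k m_k R_k`. -/
theorem best_multiplier_approximation (m n K : ℕ)
    (g : Fin K → (Fin n → ℂ)) (f : Fin K → (Fin m → ℂ))
    (T : Matrix (Fin m) (Fin n) ℂ)
    (R : Fin K → Matrix (Fin m) (Fin n) ℂ)
    (hR : ∀ k, R k = Matrix.of fun i j => f k i * conj (g k j))
    (G : Matrix (Fin K) (Fin K) ℂ)
    (hGram : ∀ l k, G l k = Matrix.trace ((R l)ᴴ * R k))
    -- `Gdag` is the Moore–Penrose pseudoinverse of `G`
    (Gdag : Matrix (Fin K) (Fin K) ℂ)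
    (h1 : G * Gdag * G = G) (h2 : Gdag * G * Gdag = Gdag)
    (h3 : (G * Gdag)ᴴ = G * Gdag) (h4 : (Gdag * G)ᴴ = Gdag * G)
    (σL : Fin K → ℂ) (hσL : ∀ k, σL k = Matrix.trace ((R k)ᴴ * T))
    (σ : Fin K → ℂ) (hσ : σ = Gdag.mulVec σL) :
    ∀ mcoef : Fin K → ℂ,
      ∑ i, ∑ j, ‖(T - ∑ k, σ k • R k) i j‖ ^ 2 ≤
        ∑ i, ∑ j, ‖(T - ∑ k, mcoef k • R k) i j‖ ^ 2 :=
  best_multiplier_approximation_general m n K T R G hGram Gdag h1 σL hσL σ hσ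
end
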